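/- arXiv:1910.12860 — 2 statements merged into one kernel-verified Lean document; each statement's English description precedes it below -/
import Mathlib

section
/- Let n ≥ 3 and m ≥ 2 be integers. Then the minimum cardinality of a doubly resolving set of the jellyfish graph JFG(n, m) equals nm; in particular, the set of all nm pendant vertices is a doubly resolving set of JFG(n, m). -/
open SimpleGraph

/-- Vertex type of the jellyfish graph `JFG(n, m)`: cycle vertices (left) and
pendant vertices (right, a cycle vertex together with a pendant index). -/
abbrev JVert (n m : ℕ) := (ZMod n) ⊕ ((ZMod n) × Fin m)

/-- The jellyfish graph `JFG(n, m)`: the cycle `C_n` together with `m` pendant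
vertices attached to each cycle vertex. -/
def jellyfish (n m : ℕ) : SimpleGraph (JVert n m) where
  Adj u v :=
    match u, v with
    | Sum.inl i, Sum.inl j => i ≠ j ∧ (i - j = 1 ∨ j - i = 1)
    | Sum.inl i, Sum.inr p => p.1 = i
    | Sum.inr p, Sum.inl i => p.1 = i
    | Sum.inr _, Sum.inr _ => False
  symm := by
    constructor
    rintro (i | p) (j | q) h
    · exact ⟨h.1.symm, h.2.symm⟩
    · exact h
    · exact h
    · exact h
  loopless := by
    constructor
    rintro (i | p) h
    · exact h.1 rfl
    · exact h


/-- Vertices `x, y` doubly resolve `u, v` if `d(u,x) - d(u,y) ≠ d(v,x) - d(v,y)`;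
`Z` is a doubly resolving set if every two distinct vertices are doubly resolved
by some two vertices of `Z`. -/
def IsDoublyResolving {V : Type*} (G : SimpleGraph V) (Z : Set V) : Prop :=
  ∀ u v : V, u ≠ v → ∃ x ∈ Z, ∃ y ∈ Z,
    (G.dist u x : ℤ) - (G.dist u y : ℤ) ≠ (G.dist v x : ℤ) - (G.dist v y : ℤ)

/-- `ψ(G)`: the minimum cardinality of a doubly resolving set of `G`. -/
noncomputable def doublyResolvingDim {V : Type*} (G : SimpleGraph V) : ℕ :=
  sInf {k | ∃ Z : Set V, IsDoublyResolving G Z ∧ Z.ncard = k}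

/-! Every pendant vertex `p` of a connected graph lies in every doubly resolving set: if `s` is
its neighbour then `d(p, z) = d(s, z) + 1` for all `z ≠ p`, so no pair avoiding `p` resolves
`p` and `s`.
Conversely, when every other vertex carries at least two pendants, the pendants alone doubly
resolve: two pendants resolve themselves, a pendant `u` and a non-pendant `v` are resolved by `u`
and a twin of `u` (equidistant from `v`), and two non-pendants by a pendant hanging at each. -/

def DoublyResolves {V : Type*} (G : SimpleGraph V) (x y u v : V) : Prop :=
  (G.dist u x : ℤ) - G.dist u y ≠ (G.dist v x : ℤ) - G.dist v y

section General

variable {V : Type*} {G : SimpleGraph V}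

lemma DoublyResolves.symm {x y u v : V} (h : DoublyResolves G x y u v) :
    DoublyResolves G x y v u :=
  Ne.symm h

lemma SimpleGraph.adj_of_neighborSet_eq {p s : V} (hp : G.neighborSet p = {s}) : G.Adj p s := by
  simp [← mem_neighborSet, hp]

lemma SimpleGraph.Preconnected.dist_eq_dist_add_one_of_neighborSet_eq (hG : G.Preconnected)
    {p s x : V} (hp : G.neighborSet p = {s}) (hx : x ≠ p) :
    G.dist x p = G.dist x s + 1 := by
  have hps := G.adj_of_neighborSet_eq hp
  rw [dist_comm, dist_comm (u := x)]
  refine le_antisymm ?_ ?_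
  · calc G.dist p x ≤ G.dist p s + G.dist s x := hps.reachable.dist_triangle_left x
      _ = G.dist s x + 1 := by rw [dist_eq_one_iff_adj.mpr hps, add_comm]
  · obtain ⟨w, hw⟩ := (hG p x).exists_walk_length_eq_dist
    cases w with
    | nil => exact absurd rfl hx
    | cons hadj q =>
      obtain rfl : _ = s := by simpa [hp] using (mem_neighborSet _ _ _).mpr hadj
      rw [← hw, Walk.length_cons]
      exact Nat.add_le_add_right (dist_le q) 1

lemma doublyResolves_self (hG : G.Preconnected) {u v : V} (huv : u ≠ v) :
    DoublyResolves G u v u v := by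
  have hd : G.dist u v ≠ 0 := dist_ne_zero_iff_ne_and_reachable.mpr ⟨huv, hG u v⟩
  unfold DoublyResolves
  rw [dist_self, dist_self, dist_comm (u := v)]
  omega

lemma doublyResolves_of_neighborSet_eq (hG : G.Preconnected) {x y u v : V}
    (hx : G.neighborSet x = {u}) (hy : G.neighborSet y = {v}) (huv : u ≠ v)
    (huy : u ≠ y) (hvx : v ≠ x) :
    DoublyResolves G x y u v := by
  have hd : G.dist u v ≠ 0 := dist_ne_zero_iff_ne_and_reachable.mpr ⟨huv, hG u v⟩
  have hux : G.dist u x = 1 := dist_eq_one_iff_adj.mpr (G.adj_of_neighborSet_eq hx).symm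
  have hvy : G.dist v y = 1 := dist_eq_one_iff_adj.mpr (G.adj_of_neighborSet_eq hy).symm
  unfold DoublyResolves
  rw [hux, hvy, hG.dist_eq_dist_add_one_of_neighborSet_eq hy huy,
    hG.dist_eq_dist_add_one_of_neighborSet_eq hx hvx, dist_comm (u := v)]
  omega

lemma doublyResolves_of_twin_pendant (hG : G.Preconnected) {u u' s v : V}
    (hu : G.neighborSet u = {s}) (hu' : G.neighborSet u' = {s}) (huu' : u ≠ u')
    (hvu : v ≠ u) (hvu' : v ≠ u') :
    DoublyResolves G u u' u v := by
  have hd : G.dist u u' ≠ 0 := dist_ne_zero_iff_ne_and_reachable.mpr ⟨huu', hG u u'⟩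
  unfold DoublyResolves
  rw [dist_self, hG.dist_eq_dist_add_one_of_neighborSet_eq hu hvu,
    hG.dist_eq_dist_add_one_of_neighborSet_eq hu' hvu']
  omega

theorem isDoublyResolving_of_pendant_pairs (hG : G.Preconnected) {L : Set V}
    (hleaf : ∀ x ∈ L, ∃ s ∉ L, G.neighborSet x = {s})
    (htwins : ∀ s ∉ L, ∃ x ∈ L, ∃ y ∈ L,
      x ≠ y ∧ G.neighborSet x = {s} ∧ G.neighborSet y = {s}) :
    IsDoublyResolving G L := by
  have pendant_vs_other :
      ∀ u ∈ L, ∀ v ∉ L, ∃ x ∈ L, ∃ y ∈ L, DoublyResolves G x y u v := by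
    intro u hu v hv
    obtain ⟨s, hs, hus⟩ := hleaf u hu
    obtain ⟨x, hx, y, hy, hxy, hxs, hys⟩ := htwins s hs
    have hvu : v ≠ u := (ne_of_mem_of_not_mem hu hv).symm
    by_cases hux : u = x
    · subst hux
      exact ⟨u, hu, y, hy, doublyResolves_of_twin_pendant hG hus hys hxy hvu
        ((ne_of_mem_of_not_mem hy hv).symm)⟩
    · exact ⟨u, hu, x, hx, doublyResolves_of_twin_pendant hG hus hxs hux hvu
        ((ne_of_mem_of_not_mem hx hv).symm)⟩
  intro u v huv
  by_cases hu : u ∈ L <;> by_cases hv : v ∈ L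
  · exact ⟨u, hu, v, hv, doublyResolves_self hG huv⟩
  · exact pendant_vs_other u hu v hv
  · obtain ⟨x, hx, y, hy, h⟩ := pendant_vs_other v hv u hu
    exact ⟨x, hx, y, hy, h.symm⟩
  · obtain ⟨x, hx, -, -, -, hxu, -⟩ := htwins u hu
    obtain ⟨y, hy, -, -, -, hyv, -⟩ := htwins v hv
    exact ⟨x, hx, y, hy, doublyResolves_of_neighborSet_eq hG hxu hyv huv
      ((ne_of_mem_of_not_mem hy hu).symm) ((ne_of_mem_of_not_mem hx hv).symm)⟩

lemma IsDoublyResolving.exists_dist_ne_dist_add {Z : Set V} (hZ : IsDoublyResolving G Z)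
    {u v : V} (huv : u ≠ v) (c : ℤ) :
    ∃ z ∈ Z, (G.dist u z : ℤ) ≠ G.dist v z + c := by
  by_contra! h
  obtain ⟨x, hx, y, hy, hne⟩ := hZ u v huv
  exact hne (by rw [h x hx, h y hy]; ring)

theorem IsDoublyResolving.mem_of_neighborSet_eq (hG : G.Preconnected) {Z : Set V}
    (hZ : IsDoublyResolving G Z) {p s : V} (hp : G.neighborSet p = {s}) : p ∈ Z := by
  have hps : p ≠ s := G.ne_of_adj (G.adj_of_neighborSet_eq hp)
  obtain ⟨z, hz, hne⟩ := hZ.exists_dist_ne_dist_add hps 1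
  by_contra hpZ
  apply hne
  rw [dist_comm, dist_comm (u := s),
    hG.dist_eq_dist_add_one_of_neighborSet_eq hp (ne_of_mem_of_not_mem hz hpZ)]
  push_cast
  rfl

theorem doublyResolvingDim_eq_ncard [Finite V] {Z₀ : Set V} (h₀ : IsDoublyResolving G Z₀)
    (hmin : ∀ Z, IsDoublyResolving G Z → Z₀ ⊆ Z) :
    doublyResolvingDim G = Z₀.ncard :=
  le_antisymm (Nat.sInf_le ⟨Z₀, h₀, rfl⟩)
    (le_csInf ⟨_, Z₀, h₀, rfl⟩ (by
      rintro _ ⟨Z, hZ, rfl⟩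
      exact Set.ncard_le_ncard (hmin Z hZ)))

end General

section Jellyfish

variable {n m : ℕ}

lemma jellyfish_reachable_inl_add_one (i : ZMod n) :
    (jellyfish n m).Reachable (Sum.inl i) (Sum.inl (i + 1)) := by
  by_cases h : i = i + 1
  · rw [← h]
  · exact Adj.reachable ⟨h, Or.inr (by ring)⟩

lemma jellyfish_preconnected : (jellyfish n m).Preconnected := by
  have hcycle : ∀ k : ℤ, (jellyfish n m).Reachable (Sum.inl 0) (Sum.inl (k : ZMod n)) := by
    intro k
    induction k using Int.induction_on with
    | zero => simp
    | succ k ih => exact ih.trans (by push_cast; exact jellyfish_reachable_inl_add_one _)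
    | pred k ih =>
      refine ih.trans (Reachable.symm ?_)
      simpa using
        jellyfish_reachable_inl_add_one (n := n) (m := m) ((-k - 1 : ℤ) : ZMod n)
  have hall : ∀ u : JVert n m, (jellyfish n m).Reachable (Sum.inl 0) u := by
    rintro (i | ⟨i, a⟩)
    · obtain ⟨k, rfl⟩ := ZMod.intCast_surjective i
      exact hcycle k
    · obtain ⟨k, rfl⟩ := ZMod.intCast_surjective i
      exact (hcycle k).trans (Adj.reachable rfl)
  exact fun u v => (hall u).symm.trans (hall v)

lemma jellyfish_neighborSet_inr (p : ZMod n × Fin m) :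
    (jellyfish n m).neighborSet (Sum.inr p) = {Sum.inl p.1} := by
  ext (j | q)
  · exact ⟨fun h => congrArg Sum.inl (Eq.symm h), fun h => (Sum.inl_injective h).symm⟩
  · simp only [mem_neighborSet, Set.mem_singleton_iff, reduceCtorEq, iff_false]
    exact id

lemma jellyfish_isDoublyResolving_range_inr (hm : 2 ≤ m) :
    IsDoublyResolving (jellyfish n m) (Set.range (Sum.inr : ZMod n × Fin m → JVert n m)) := by
  refine isDoublyResolving_of_pendant_pairs jellyfish_preconnected ?_ ?_
  · rintro _ ⟨p, rfl⟩
    exact ⟨Sum.inl p.1, by simp, jellyfish_neighborSet_inr p⟩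
  · rintro (i | p) hs
    · exact ⟨Sum.inr (i, ⟨0, by omega⟩), ⟨_, rfl⟩, Sum.inr (i, ⟨1, by omega⟩), ⟨_, rfl⟩,
        by simp, jellyfish_neighborSet_inr _, jellyfish_neighborSet_inr _⟩
    · exact absurd ⟨p, rfl⟩ hs

lemma jellyfish_range_inr_subset_of_isDoublyResolving {Z : Set (JVert n m)}
    (hZ : IsDoublyResolving (jellyfish n m) Z) : Set.range Sum.inr ⊆ Z := by
  rintro _ ⟨p, rfl⟩
  exact hZ.mem_of_neighborSet_eq jellyfish_preconnected (jellyfish_neighborSet_inr p)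

lemma ncard_range_inr [NeZero n] :
    (Set.range (Sum.inr : ZMod n × Fin m → JVert n m)).ncard = n * m := by
  rw [← Nat.card_coe_set_eq, Nat.card_range_of_injective Sum.inr_injective]
  simp [Nat.card_eq_fintype_card, ZMod.card]

end Jellyfish

theorem jellyfish_doublyResolvingDim (n m : ℕ) (hn : 3 ≤ n) (hm : 2 ≤ m) :
    doublyResolvingDim (jellyfish n m) = n * m ∧
    IsDoublyResolving (jellyfish n m) (Set.range (Sum.inr : ZMod n × Fin m → JVert n m)) := by
  have : NeZero n := ⟨by omega⟩
  have hL := jellyfish_isDoublyResolving_range_inr (n := n) hm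
  refine ⟨?_, hL⟩
  rw [doublyResolvingDim_eq_ncard hL fun _ => jellyfish_range_inr_subset_of_isDoublyResolving,
    ncard_range_inr]
end

section
/- Let n ≥ 4 and let Γ = Cay(D_{2n}, Ω) be the Cayley graph on the dihedral group D_{2n} = ⟨a, b | aⁿ = b² = 1, ba = aⁿ⁻¹b⟩ with connection set Ω = {a, a², ..., aⁿ⁻¹, ab, a²b, ..., aⁿ⁻¹b} (so Γ is isomorphic to the cocktail party graph CP(n), the complete graph K_{2n} with a perfect matching removed). Then the minimum cardinality of a resolving set, the minimum cardinality of a doubly resolving set, and the minimum cardinality of a strong resolving set of Γ all equal n. -/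
open SimpleGraph

/-- The Cayley graph `Cay(D_{2n}, Ω)` on the dihedral group
`D_{2n} = ⟨a, b | aⁿ = b² = 1, ba = aⁿ⁻¹b⟩` with connection set
`Ω = {a, a², ..., aⁿ⁻¹, ab, a²b, ..., aⁿ⁻¹b} = D_{2n} \ {1, b}`
(here `b` is `DihedralGroup.sr 0`): `x ~ y` iff `x⁻¹ * y ∈ Ω`.
This graph is isomorphic to the cocktail party graph `CP(n)`. -/
def dihedralCocktailParty (n : ℕ) : SimpleGraph (DihedralGroup n) where
  Adj x y := x⁻¹ * y ≠ 1 ∧ x⁻¹ * y ≠ DihedralGroup.sr 0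
  symm := by
    refine ⟨?_⟩
    rintro x y ⟨h1, h2⟩
    constructor
    · intro h
      apply h1
      have : (y⁻¹ * x)⁻¹ = (1 : DihedralGroup n)⁻¹ := congrArg Inv.inv h
      rwa [mul_inv_rev, inv_inv, inv_one] at this
    · intro h
      apply h2
      have : (y⁻¹ * x)⁻¹ = (DihedralGroup.sr (0 : ZMod n))⁻¹ := congrArg Inv.inv h
      rwa [mul_inv_rev, inv_inv, show (DihedralGroup.sr (0 : ZMod n))⁻¹ =
        DihedralGroup.sr 0 from rfl] at this
  loopless := by
    refine ⟨?_⟩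
    rintro x ⟨h1, -⟩
    exact h1 (by group)

/-- `W` is a resolving set of `G`. -/
def IsResolving {V : Type*} (G : SimpleGraph V) (W : Set V) : Prop :=
  ∀ u v : V, u ≠ v → ∃ w ∈ W, G.dist u w ≠ G.dist v w

/-- The metric dimension of `G`: the minimum cardinality of a resolving set. -/
noncomputable def metricDim {V : Type*} (G : SimpleGraph V) : ℕ :=
  sInf {k | ∃ W : Set V, IsResolving G W ∧ W.ncard = k}

/-- `w` strongly resolves `u` and `v`: `u` lies on a shortest `v`–`w` path or
`v` lies on a shortest `u`–`w` path. -/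
def StronglyResolves {V : Type*} (G : SimpleGraph V) (w u v : V) : Prop :=
  G.dist v w = G.dist v u + G.dist u w ∨ G.dist u w = G.dist u v + G.dist v w

/-- `N` is a strong resolving set of `G`. -/
def IsStrongResolving {V : Type*} (G : SimpleGraph V) (N : Set V) : Prop :=
  ∀ u v : V, u ≠ v → ∃ w ∈ N, StronglyResolves G w u v

/-- The strong metric dimension of `G`: the minimum cardinality of a strong
resolving set. -/
noncomputable def strongMetricDim {V : Type*} (G : SimpleGraph V) : ℕ :=
  sInf {k | ∃ N : Set V, IsStrongResolving G N ∧ N.ncard = k}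

/-!
`Γ` is the cocktail party graph whose missing perfect matching pairs `x` with `x * b`, so
`d(x, y)` is `0`, `2` or `1` according as `y = x`, `y = x * b` or neither. Only `x` and `x * b`
distinguish `x` from `x * b`, so a resolving set meets all `n` pairs; doubly and strong resolving
sets are resolving, which gives the lower bound `n`. Conversely the rotations, one vertex from each
pair, form a set of all three kinds: `u` is separated from any `v` by the vertex of its own pair,
and since there are at least three pairs, a rotation outside the pairs of `u` and `v` is at
distance `1` from both, which makes the resolving set doubly resolving.
-/

section General

variable {V : Type*} {G : SimpleGraph V}

theorem IsDoublyResolving.isResolving {Z : Set V} (h : IsDoublyResolving G Z) :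
    IsResolving G Z := by
  intro u v huv
  obtain ⟨x, hx, y, hy, hxy⟩ := h u v huv
  by_cases hux : G.dist u x = G.dist v x
  · exact ⟨y, hy, fun huy => hxy (by rw [hux, huy])⟩
  · exact ⟨x, hx, hux⟩

theorem IsStrongResolving.isResolving (hG : G.Connected) {N : Set V}
    (h : IsStrongResolving G N) : IsResolving G N := by
  intro u v huv
  have huv_pos := hG.pos_dist_of_ne huv
  have hvu_pos := hG.pos_dist_of_ne huv.symm
  obtain ⟨w, hw, hres | hres⟩ := h u v huv
  all_goals exact ⟨w, hw, by omega⟩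

theorem sInf_ncard_eq {P : Set V → Prop} {T : Set V} (hT : P T)
    (hmin : ∀ W, P W → T.ncard ≤ W.ncard) :
    sInf {k | ∃ W, P W ∧ W.ncard = k} = T.ncard :=
  IsLeast.csInf_eq ⟨⟨T, hT, rfl⟩, by rintro k ⟨W, hW, rfl⟩; exact hmin W hW⟩

theorem Finset.exists_notMem_of_card_lt_natCard (s : Finset V) (h : s.card < Nat.card V) :
    ∃ z, z ∉ s := by
  by_contra! hs
  rw [← Set.ncard_univ, ← Set.eq_univ_of_forall hs, Set.ncard_coe_finset] at h
  exact lt_irrefl _ h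

end General

section CocktailParty

variable {V : Type*} {p : V → V}

/-- The cocktail party graph on `V` whose removed perfect matching is `{x, p x}`. -/
def cocktailParty (p : V → V) (hp : Function.Involutive p) : SimpleGraph V where
  Adj x y := x ≠ y ∧ y ≠ p x
  symm := ⟨fun _ _ h => ⟨h.1.symm, fun hx => h.2 (by rw [hx, hp])⟩⟩
  loopless := ⟨fun _ h => h.1 rfl⟩

def MeetsPairs (p : V → V) (T : Set V) : Prop :=
  ∀ x, x ∈ T ∨ p x ∈ T

theorem Nat.card_le_two_mul_ncard_of_meetsPairs [Finite V] (hp : Function.Involutive p)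
    {W : Set V} (hW : MeetsPairs p W) : Nat.card V ≤ 2 * W.ncard := by
  have hcover : Set.univ ⊆ W ∪ p '' W := fun x _ =>
    (hW x).imp id fun h => ⟨p x, h, hp x⟩
  calc Nat.card V = (Set.univ : Set V).ncard := (Set.ncard_univ V).symm
    _ ≤ (W ∪ p '' W).ncard := Set.ncard_le_ncard hcover
    _ ≤ W.ncard + (p '' W).ncard := Set.ncard_union_le _ _
    _ ≤ 2 * W.ncard := by linarith [Set.ncard_image_le (f := p) W.toFinite]

variable (hp : Function.Involutive p)

@[simp]
theorem cocktailParty_adj {x y : V} : (cocktailParty p hp).Adj x y ↔ x ≠ y ∧ y ≠ p x :=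
  Iff.rfl

theorem cocktailParty_dist_eq_one {x y : V} (hxy : x ≠ y) (hyx : y ≠ p x) :
    (cocktailParty p hp).dist x y = 1 :=
  dist_eq_one_iff_adj.2 ⟨hxy, hyx⟩

theorem cocktailParty_dist_apply (hfix : ∀ x, p x ≠ x) (hV : 2 < Nat.card V) (x : V) :
    (cocktailParty p hp).dist x (p x) = 2 := by
  classical
  obtain ⟨z, hz⟩ := Finset.exists_notMem_of_card_lt_natCard {x, p x}
    (Finset.card_le_two.trans_lt hV)
  simp only [Finset.mem_insert, Finset.mem_singleton, not_or] at hz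
  have hxz : (cocktailParty p hp).Adj x z := ⟨fun h => hz.1 h.symm, hz.2⟩
  have hzx : (cocktailParty p hp).Adj z (p x) := ⟨hz.2, fun h => hz.1 (hp.injective h).symm⟩
  have hle : (cocktailParty p hp).dist x (p x) ≤ 2 := dist_le (hxz.toWalk.append hzx.toWalk)
  have hpos := (hxz.reachable.trans hzx.reachable).pos_dist_of_ne (hfix x).symm
  have hne : (cocktailParty p hp).dist x (p x) ≠ 1 := fun h => (dist_eq_one_iff_adj.1 h).2 rfl
  omega

theorem cocktailParty_connected (hfix : ∀ x, p x ≠ x) (hV : 2 < Nat.card V) :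
    (cocktailParty p hp).Connected := by
  have : Nonempty V := (Nat.card_pos_iff.1 (by omega)).1
  refine Connected.mk fun x y => ?_
  by_cases hxy : x = y
  · exact hxy ▸ Reachable.refl x
  by_cases hyx : y = p x
  · exact hyx ▸ Reachable.of_dist_ne_zero (by rw [cocktailParty_dist_apply hp hfix hV]; omega)
  · exact Adj.reachable ⟨hxy, hyx⟩

theorem meetsPairs_of_isResolving_cocktailParty (hfix : ∀ x, p x ≠ x) {W : Set V}
    (hW : IsResolving (cocktailParty p hp) W) : MeetsPairs p W := by
  intro x
  obtain ⟨w, hw, hne⟩ := hW x (p x) (hfix x).symm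
  by_contra! hxW
  have hxw : x ≠ w := fun h => hxW.1 (h ▸ hw)
  have hwx : w ≠ p x := fun h => hxW.2 (h ▸ hw)
  apply hne
  rw [cocktailParty_dist_eq_one hp hxw hwx,
    cocktailParty_dist_eq_one hp hwx.symm (by rw [hp]; exact hxw.symm)]

theorem isResolving_cocktailParty_of_meetsPairs (hfix : ∀ x, p x ≠ x) {T : Set V}
    (hT : MeetsPairs p T) (hV : 2 < Nat.card V) : IsResolving (cocktailParty p hp) T := by
  intro u v huv
  rcases hT u with hu | hu
  · refine ⟨u, hu, ?_⟩
    rw [dist_self]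
    exact ((cocktailParty_connected hp hfix hV).pos_dist_of_ne huv.symm).ne
  · refine ⟨p u, hu, ?_⟩
    rw [cocktailParty_dist_apply hp hfix hV]
    by_cases hv : v = p u
    · rw [hv, dist_self]
      omega
    · rw [cocktailParty_dist_eq_one hp hv fun h => huv (hp.injective h)]
      omega

theorem isStrongResolving_cocktailParty_of_meetsPairs (hfix : ∀ x, p x ≠ x) {T : Set V}
    (hT : MeetsPairs p T) (hV : 2 < Nat.card V) : IsStrongResolving (cocktailParty p hp) T := by
  intro u v huv
  rcases hT u with hu | hu
  · exact ⟨u, hu, Or.inl (by rw [dist_self, add_zero])⟩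
  · refine ⟨p u, hu, Or.inr ?_⟩
    rw [cocktailParty_dist_apply hp hfix hV]
    by_cases hv : v = p u
    · rw [hv, dist_self, cocktailParty_dist_apply hp hfix hV]
    · rw [cocktailParty_dist_eq_one hp huv hv,
        cocktailParty_dist_eq_one hp hv fun h => huv (hp.injective h)]

theorem isDoublyResolving_cocktailParty_of_meetsPairs (hfix : ∀ x, p x ≠ x) {T : Set V}
    (hT : MeetsPairs p T) (hV : 4 < Nat.card V) : IsDoublyResolving (cocktailParty p hp) T := by
  classical
  intro u v huv
  obtain ⟨x, hx, hux⟩ := isResolving_cocktailParty_of_meetsPairs hp hfix hT (by omega) u v huv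
  set s : Finset V := {u, p u, v, p v}
  have hfar : ∀ y ∉ s,
      (cocktailParty p hp).dist u y = 1 ∧ (cocktailParty p hp).dist v y = 1 := by
    intro y hy
    simp only [s, Finset.mem_insert, Finset.mem_singleton, not_or] at hy
    exact ⟨cocktailParty_dist_eq_one hp (Ne.symm hy.1) hy.2.1,
      cocktailParty_dist_eq_one hp (Ne.symm hy.2.2.1) hy.2.2.2⟩
  obtain ⟨z, hz⟩ := Finset.exists_notMem_of_card_lt_natCard s (Finset.card_le_four.trans_lt hV)
  have hpz : p z ∉ s := by
    simp only [s, Finset.mem_insert, Finset.mem_singleton, hp.eq_iff, hp u, hp v] at hz ⊢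
    tauto
  obtain ⟨y, hy, hys⟩ : ∃ y ∈ T, y ∉ s := (hT z).elim (⟨z, ·, hz⟩) (⟨p z, ·, hpz⟩)
  obtain ⟨huy, hvy⟩ := hfar y hys
  refine ⟨x, hx, y, hy, ?_⟩
  rw [huy, hvy]
  omega

theorem cocktailParty_dims (hfix : ∀ x, p x ≠ x) {T : Set V} (hT : MeetsPairs p T)
    (hV : 4 < Nat.card V) (hcard : Nat.card V = 2 * T.ncard) :
    metricDim (cocktailParty p hp) = T.ncard ∧
    doublyResolvingDim (cocktailParty p hp) = T.ncard ∧
    strongMetricDim (cocktailParty p hp) = T.ncard := by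
  have : Finite V := Nat.finite_of_card_ne_zero (by omega)
  have hV2 : 2 < Nat.card V := by omega
  have hmin : ∀ W, IsResolving (cocktailParty p hp) W → T.ncard ≤ W.ncard := fun W hW => by
    have := Nat.card_le_two_mul_ncard_of_meetsPairs hp
      (meetsPairs_of_isResolving_cocktailParty hp hfix hW)
    omega
  exact ⟨sInf_ncard_eq (isResolving_cocktailParty_of_meetsPairs hp hfix hT hV2) hmin,
    sInf_ncard_eq (isDoublyResolving_cocktailParty_of_meetsPairs hp hfix hT hV) fun W hW =>
      hmin W (IsDoublyResolving.isResolving hW),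
    sInf_ncard_eq (isStrongResolving_cocktailParty_of_meetsPairs hp hfix hT hV2) fun W hW =>
      hmin W (IsStrongResolving.isResolving (cocktailParty_connected hp hfix hV2) hW)⟩

end CocktailParty

namespace DihedralGroup

variable {n : ℕ}

theorem sr_ne_one (i : ZMod n) : sr i ≠ 1 := by
  rw [one_def]
  nofun

theorem mul_sr_involutive (i : ZMod n) : Function.Involutive (· * sr i) := fun x => by
  simp only [mul_assoc, sr_mul_self, mul_one]

theorem ncard_range_r : (Set.range (r : ZMod n → DihedralGroup n)).ncard = n := by
  rw [Set.ncard_range_of_injective fun _ _ => r.inj, Nat.card_zmod]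

theorem meetsPairs_range_r (i : ZMod n) : MeetsPairs (· * sr i) (Set.range r) := by
  intro x
  cases x with
  | r j => exact Or.inl ⟨j, rfl⟩
  | sr j => exact Or.inr ⟨i - j, (sr_mul_sr j i).symm⟩

end DihedralGroup

open DihedralGroup in
theorem dihedralCocktailParty_eq (n : ℕ) :
    dihedralCocktailParty n = cocktailParty (· * sr 0) (mul_sr_involutive 0) := by
  ext x y
  simp only [dihedralCocktailParty, cocktailParty_adj, ne_eq, inv_mul_eq_iff_eq_mul, mul_one,
    eq_comm (a := y)]

theorem dihedralCocktailParty_dims (n : ℕ) (hn : 4 ≤ n) :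
    metricDim (dihedralCocktailParty n) = n ∧
    doublyResolvingDim (dihedralCocktailParty n) = n ∧
    strongMetricDim (dihedralCocktailParty n) = n := by
  have hV : 4 < Nat.card (DihedralGroup n) := by
    rw [DihedralGroup.nat_card]
    omega
  have hcard :
      Nat.card (DihedralGroup n) = 2 * (Set.range (DihedralGroup.r (n := n))).ncard := by
    rw [DihedralGroup.nat_card, DihedralGroup.ncard_range_r]
  rw [dihedralCocktailParty_eq]
  simpa only [DihedralGroup.ncard_range_r] using
    cocktailParty_dims (DihedralGroup.mul_sr_involutive 0)
      (fun _ => mul_ne_left.2 (DihedralGroup.sr_ne_one 0)) (DihedralGroup.meetsPairs_range_r 0)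
      hV hcard
end
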